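/- Let s and S be duplicate-free lists with s a subsequence of S and with the same first element. Let v be an element of S that does not occur in s, and let a and b be elements occurring in s. Then [a, v, b] is a sublist of S if and only if a ⪯_s prev(v, s, S) and prev(v, s, S) ≺_s b. -/

import Mathlib

/-!
Since `S` has no duplicates, a list is a sublist of `S` exactly when its elements lie in `S` in
increasing order of their position `S.idxOf`; as `s <+ S`, the same holds for sublists of `s`.
Measured by these positions, `prev v s S` is the element of `s` of largest position below that
of `v`: such elements exist because the common head of `s` and `S` is not `v`. Hence for `x ∈ s`,
`x` is at or before `prev v s S` iff `x` is before `v`, and both sides of the equivalence become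
the same inequalities between positions.
-/

variable {V : Type*}

/-- `a` precedes `b` in `s`: `[a, b]` is a sublist of `s`. -/
def prec (a b : V) (s : List V) : Prop := [a, b].Sublist s

/-- `a ⪯_s b`: `a = b` or `a ≺_s b`. -/
def preceq (a b : V) (s : List V) : Prop := a = b ∨ prec a b s

/-- The prefix of `S` strictly before `v`, filtered to elements of `s`. -/
def prevList [DecidableEq V] (v : V) (s S : List V) : List V :=
  (S.takeWhile (· ≠ v)).filter (· ∈ s)

/-- `prev(v, s, S)`: `v` itself if `v` occurs in `s`, otherwise the last element of `s`
occurring before `v` in `S`. -/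
def prev [DecidableEq V] (v : V) (s S : List V) : V :=
  if v ∈ s then v else (prevList v s S).getLastD v

namespace List

variable {α : Type*}

theorem Nodup.pairwise_idxOf_lt [DecidableEq α] {l : List α} (hl : l.Nodup) :
    l.Pairwise (fun x y => l.idxOf x < l.idxOf y) := by
  rw [pairwise_iff_getElem]
  intro i j hi hj hij
  simpa [hl.idxOf_getElem] using hij

theorem takeWhile_ne_eq_take_idxOf [DecidableEq α] (l : List α) (v : α) :
    l.takeWhile (· ≠ v) = l.take (l.idxOf v) := by
  rw [takeWhile_eq_take_findIdx_not]
  simp only [Bool.not_not, ne_eq, decide_not]; rfl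

section

variable {β : Type*} [Preorder β] {f : α → β} {s : List α}

theorem Pairwise.sublist_iff_subset_and_pairwise {l : List α}
    (hs : s.Pairwise (fun x y => f x < f y)) :
    l <+ s ↔ l ⊆ s ∧ l.Pairwise (fun x y => f x < f y) := by
  refine ⟨fun h => ⟨h.subset, hs.sublist h⟩, fun ⟨hsub, hl⟩ => ?_⟩
  have hnodup : l.Nodup := hl.imp fun h e => (e ▸ h).false
  exact sublist_of_subperm_of_pairwise (subperm_of_subset hnodup hsub) hl hs

theorem Pairwise.pair_sublist_iff (hs : s.Pairwise (fun x y => f x < f y)) {x y : α} :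
    [x, y] <+ s ↔ x ∈ s ∧ y ∈ s ∧ f x < f y := by
  simp [hs.sublist_iff_subset_and_pairwise, and_assoc]

theorem Pairwise.triple_sublist_iff (hs : s.Pairwise (fun x y => f x < f y)) {x y z : α} :
    [x, y, z] <+ s ↔ x ∈ s ∧ y ∈ s ∧ z ∈ s ∧ f x < f y ∧ f y < f z := by
  simp only [hs.sublist_iff_subset_and_pairwise, cons_subset, nil_subset, pairwise_cons, mem_cons,
    forall_eq_or_imp, not_mem_nil, false_imp_iff, implies_true, and_true, Pairwise.nil]
  exact ⟨fun ⟨hmem, ⟨hxy, _⟩, hyz⟩ => ⟨hmem.1, hmem.2.1, hmem.2.2, hxy, hyz⟩,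
    fun ⟨hx, hy, hz, hxy, hyz⟩ => ⟨⟨hx, hy, hz⟩, ⟨hxy, hxy.trans hyz⟩, hyz⟩⟩

end

end List

section Prev

variable [DecidableEq V] {s S : List V} {v : V}

theorem mem_prevList (hsub : s ⊆ S) {x : V} :
    x ∈ prevList v s S ↔ x ∈ s ∧ S.idxOf x < S.idxOf v := by
  rw [prevList, List.mem_filter, List.takeWhile_ne_eq_take_idxOf, decide_eq_true_eq]
  exact ⟨fun ⟨hx, hxs⟩ => ⟨hxs, (List.mem_take_iff_idxOf_lt (hsub hxs)).1 hx⟩,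
    fun ⟨hxs, hx⟩ => ⟨(List.mem_take_iff_idxOf_lt (hsub hxs)).2 hx, hxs⟩⟩

theorem prevList_ne_nil (hsub : s ⊆ S) (hhead : s.head? = S.head?) (hs : s ≠ [])
    (hvs : v ∉ s) : prevList v s S ≠ [] := by
  obtain ⟨c, t, rfl⟩ := List.exists_cons_of_ne_nil hs
  obtain ⟨T, rfl⟩ : ∃ T, S = c :: T := by
    cases S <;> simp_all
  have hcv : c ≠ v := by rintro rfl; simp at hvs
  refine List.ne_nil_of_mem ((mem_prevList hsub).2 ⟨List.mem_cons_self, ?_⟩)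
  simp [List.idxOf_cons_ne _ hcv]

theorem prev_eq_getLast (hvs : v ∉ s) (hne : prevList v s S ≠ []) :
    prev v s S = (prevList v s S).getLast hne := by
  simp [prev, hvs, List.getLast?_eq_some_getLast hne]

theorem prev_mem_prevList (hsub : s ⊆ S) (hhead : s.head? = S.head?) (hs : s ≠ [])
    (hvs : v ∉ s) : prev v s S ∈ prevList v s S := by
  rw [prev_eq_getLast hvs (prevList_ne_nil hsub hhead hs hvs)]
  exact List.getLast_mem _

theorem prev_mem (hsub : s ⊆ S) (hhead : s.head? = S.head?) (hs : s ≠ []) (hvs : v ∉ s) :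
    prev v s S ∈ s :=
  ((mem_prevList hsub).1 (prev_mem_prevList hsub hhead hs hvs)).1

theorem idxOf_le_idxOf_prev_iff (hS : S.Nodup) (hsub : s.Sublist S) (hhead : s.head? = S.head?)
    (hs : s ≠ []) (hvs : v ∉ s) {x : V} (hx : x ∈ s) :
    S.idxOf x ≤ S.idxOf (prev v s S) ↔ S.idxOf x < S.idxOf v := by
  have hprev := prev_mem_prevList hsub.subset hhead hs hvs
  refine ⟨fun h => h.trans_lt ((mem_prevList hsub.subset).1 hprev).2, fun h => ?_⟩
  have hsorted : (prevList v s S).Pairwise (fun x y => S.idxOf x ≤ S.idxOf y) :=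
    (hS.pairwise_idxOf_lt.sublist (List.filter_sublist.trans (List.takeWhile_sublist _))).imp
      le_of_lt
  rw [prev_eq_getLast hvs (List.ne_nil_of_mem hprev)]
  exact hsorted.rel_getLast_of_rel_getLast_getLast ((mem_prevList hsub.subset).2 ⟨hx, h⟩) le_rfl

end Prev

theorem between_iff_prev_general [DecidableEq V] (s S : List V)
    (hS : S.Nodup) (hsub : s.Sublist S)
    (hhead : s.head? = S.head?)
    (v : V) (hv : v ∈ S) (hvs : v ∉ s)
    (a b : V) (ha : a ∈ s) (hb : b ∈ s) :
    [a, v, b].Sublist S ↔ preceq a (prev v s S) s ∧ prec (prev v s S) b s := by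
  have hs : s ≠ [] := List.ne_nil_of_mem ha
  have hp := prev_mem hsub.subset hhead hs hvs
  have hap : a = prev v s S ↔ S.idxOf a = S.idxOf (prev v s S) :=
    (List.idxOf_inj (hsub.subset ha)).symm
  have hpb : S.idxOf (prev v s S) < S.idxOf b ↔ S.idxOf v < S.idxOf b := by
    have hbv : S.idxOf b ≠ S.idxOf v := fun h => hvs ((List.idxOf_inj (hsub.subset hb)).1 h ▸ hb)
    rw [← not_le, idxOf_le_idxOf_prev_iff hS hsub hhead hs hvs hb]
    omega
  have hsorted := hS.pairwise_idxOf_lt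
  rw [preceq, prec, prec, hsorted.triple_sublist_iff, (hsorted.sublist hsub).pair_sublist_iff,
    (hsorted.sublist hsub).pair_sublist_iff]
  simp only [hsub.subset ha, hsub.subset hb, hv, hp, ha, hb, true_and]
  rw [hap, ← le_iff_eq_or_lt, hpb, idxOf_le_idxOf_prev_iff hS hsub hhead hs hvs ha]

theorem between_iff_prev [DecidableEq V] (s S : List V)
    (hs : s.Nodup) (hS : S.Nodup) (hsub : s.Sublist S)
    (hhead : s.head? = S.head?)
    (v : V) (hv : v ∈ S) (hvs : v ∉ s)
    (a b : V) (ha : a ∈ s) (hb : b ∈ s) :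
    [a, v, b].Sublist S ↔ preceq a (prev v s S) s ∧ prec (prev v s S) b s :=
  between_iff_prev_general s S hS hsub hhead v hv hvs a b ha hb
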